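/- arXiv:1608.05590 — 3 statements merged into one kernel-verified Lean document; each statement's English description precedes it below -/
import Mathlib

section
/- Let ζ₁ and ζ₂ be jointly complex Gaussian random variables (centered) with E[|ζ₂|²] > 0, and let 1 ≤ p < 2. Then E[|ζ₁/ζ₂|^p] < ∞. -/
/-! On the full-measure event `Z₁ ≠ 0` we have `ζ₁ / ζ₂ = α / γ + (β / γ) (Z₂ / Z₁)`, so it is
enough that `Z₂ / Z₁ ∈ Lᵖ`. By independence `E ‖Z₂ / Z₁‖ᵖ = E ‖Z₁‖⁻ᵖ · E ‖Z₂‖ᵖ`, and both factors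
are finite: in polar coordinates `∫ ‖z‖^q e^{-‖z‖²} dz = 2π ∫₀^∞ r^{q+1} e^{-r²} dr`, which
converges for `q > -2`, in particular for `q = -p > -2`. -/

open MeasureTheory

/-- The standard complex Gaussian distribution: density `(1/π) e^{-|z|²}`
with respect to Lebesgue measure on `ℂ`. -/
noncomputable def stdCGaussian : Measure ℂ :=
  volume.withDensity (fun z => ENNReal.ofReal ((1 / Real.pi) * Real.exp (-‖z‖ ^ 2)))

open ProbabilityTheory Real

lemma integrable_norm_rpow_mul_exp_neg_sq {E : Type*} [NormedAddCommGroup E] [NormedSpace ℝ E]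
    [Nontrivial E] [FiniteDimensional ℝ E] [MeasurableSpace E] [BorelSpace E]
    (μ : Measure E) [μ.IsAddHaarMeasure] {q : ℝ} (hq : -(Module.finrank ℝ E : ℝ) < q) :
    Integrable (fun x : E => ‖x‖ ^ q * exp (-‖x‖ ^ 2)) μ := by
  have hd : 1 ≤ Module.finrank ℝ E := Module.finrank_pos
  rw [integrable_fun_norm_addHaar μ (f := fun y => y ^ q * exp (-y ^ 2))]
  refine (integrableOn_rpow_mul_exp_neg_mul_sq one_pos
    (s := q + (Module.finrank ℝ E - 1 : ℕ)) (by push_cast [hd]; linarith)).congr_fun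
    (fun y (hy : 0 < y) => ?_) measurableSet_Ioi
  simp only [smul_eq_mul, rpow_add hy, rpow_natCast, neg_one_mul]
  ring

lemma integrable_norm_rpow_stdCGaussian {q : ℝ} (hq : -2 < q) :
    Integrable (fun z : ℂ => ‖z‖ ^ q) stdCGaussian := by
  rw [stdCGaussian, integrable_withDensity_iff (by fun_prop)
    (.of_forall fun _ => ENNReal.ofReal_lt_top)]
  refine ((integrable_norm_rpow_mul_exp_neg_sq volume
    (by rwa [Complex.finrank_real_complex, Nat.cast_ofNat])).const_mul π⁻¹).congr
    (.of_forall fun z => ?_)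
  dsimp only
  rw [ENNReal.toReal_ofReal (by positivity)]
  ring

lemma ae_ne_zero_stdCGaussian : ∀ᵐ z ∂stdCGaussian, z ≠ 0 :=
  withDensity_absolutelyContinuous _ _ (by simp)

lemma norm_div_rpow {𝕜 : Type*} [NormedDivisionRing 𝕜] (x y : 𝕜) (p : ℝ) :
    ‖y / x‖ ^ p = ‖x‖ ^ (-p) * ‖y‖ ^ p := by
  rw [norm_div, div_rpow (norm_nonneg _) (norm_nonneg _), rpow_neg (norm_nonneg _),
    div_eq_inv_mul]

lemma ProbabilityTheory.IndepFun.integrable_norm_div_rpow {Ω 𝕜 : Type*} [MeasurableSpace Ω]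
    {μ : Measure Ω} [NormedDivisionRing 𝕜] [MeasurableSpace 𝕜] [OpensMeasurableSpace 𝕜]
    {X Y : Ω → 𝕜} {p : ℝ}
    (hXY : X ⟂ᵢ[μ] Y) (hX : Integrable (fun ω => ‖X ω‖ ^ (-p)) μ)
    (hY : Integrable (fun ω => ‖Y ω‖ ^ p) μ) :
    Integrable (fun ω => ‖Y ω / X ω‖ ^ p) μ := by
  simp_rw [norm_div_rpow]
  exact (hXY.comp (φ := fun x => ‖x‖ ^ (-p)) (ψ := fun y => ‖y‖ ^ p) (by fun_prop)
    (by fun_prop)).integrable_mul hX hY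

lemma integrable_norm_rpow_of_map_eq_stdCGaussian {Ω : Type*} [MeasurableSpace Ω]
    {P : Measure Ω} {Z : Ω → ℂ} (hZ : Measurable Z) (hlaw : P.map Z = stdCGaussian) {q : ℝ}
    (hq : -2 < q) :
    Integrable (fun ω => ‖Z ω‖ ^ q) P :=
  (hlaw ▸ integrable_norm_rpow_stdCGaussian hq).comp_measurable hZ

-- No assumption on `γ` is needed: for `γ = 0` both sides are `0`.
lemma add_mul_div_mul_eq {K : Type*} [Field K] (α β γ : K) {x : K} (hx : x ≠ 0) (y : K) :
    (α * x + β * y) / (γ * x) = α / γ + β / γ * (y / x) := by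
  rw [add_div, mul_div_mul_right _ _ hx, mul_div_mul_comm]

theorem stmt2_general {Ω : Type*} [MeasurableSpace Ω] (P : Measure Ω) [IsProbabilityMeasure P]
    (Z₁ Z₂ : Ω → ℂ) (hm₁ : Measurable Z₁) (hm₂ : Measurable Z₂)
    (hl₁ : Measure.map Z₁ P = stdCGaussian) (hl₂ : Measure.map Z₂ P = stdCGaussian)
    (hind : ProbabilityTheory.IndepFun Z₁ Z₂ P)
    (α β γ : ℂ) (ζ₁ ζ₂ : Ω → ℂ)
    (hζ₁ : ζ₁ = fun ω => α * Z₁ ω + β * Z₂ ω)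
    (hζ₂ : ζ₂ = fun ω => γ * Z₁ ω)
    (p : ℝ) (hp1 : 1 ≤ p) (hp2 : p < 2) :
    Integrable (fun ω => ‖ζ₁ ω / ζ₂ ω‖ ^ p) P := by
  subst hζ₁ hζ₂
  have hp : 0 < p := by linarith
  have hZ₁ : ∀ᵐ ω ∂P, Z₁ ω ≠ 0 := ae_of_ae_map hm₁.aemeasurable (hl₁ ▸ ae_ne_zero_stdCGaussian)
  have hratio : MemLp (Z₂ / Z₁) (ENNReal.ofReal p) P := by
    rw [← integrable_norm_rpow_iff (hm₂.div hm₁).aestronglyMeasurable (by simpa)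
      ENNReal.ofReal_ne_top, ENNReal.toReal_ofReal hp.le]
    exact hind.integrable_norm_div_rpow
      (integrable_norm_rpow_of_map_eq_stdCGaussian hm₁ hl₁ (by linarith))
      (integrable_norm_rpow_of_map_eq_stdCGaussian hm₂ hl₂ (by linarith))
  have haffine := ((memLp_const (α / γ)).add (hratio.const_mul (β / γ))).integrable_norm_rpow'
  rw [ENNReal.toReal_ofReal hp.le] at haffine
  refine haffine.congr (hZ₁.mono fun ω hω => ?_)
  simp only [Pi.add_apply, Pi.div_apply, add_mul_div_mul_eq α β γ hω]

/-- If `ζ₁, ζ₂` are centered jointly complex Gaussian (represented via i.i.d. standard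
complex Gaussians `Z₁, Z₂` as `ζ₁ = αZ₁ + βZ₂`, `ζ₂ = γZ₁`) with `E[|ζ₂|²] > 0`,
and `1 ≤ p < 2`, then `E[|ζ₁/ζ₂|^p] < ∞`. -/
theorem stmt2 {Ω : Type*} [MeasurableSpace Ω] (P : Measure Ω) [IsProbabilityMeasure P]
    (Z₁ Z₂ : Ω → ℂ) (hm₁ : Measurable Z₁) (hm₂ : Measurable Z₂)
    (hl₁ : Measure.map Z₁ P = stdCGaussian) (hl₂ : Measure.map Z₂ P = stdCGaussian)
    (hind : ProbabilityTheory.IndepFun Z₁ Z₂ P)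
    (α β γ : ℂ) (ζ₁ ζ₂ : Ω → ℂ)
    (hζ₁ : ζ₁ = fun ω => α * Z₁ ω + β * Z₂ ω)
    (hζ₂ : ζ₂ = fun ω => γ * Z₁ ω)
    (hvar : 0 < ∫ ω, ‖ζ₂ ω‖ ^ 2 ∂P)
    (p : ℝ) (hp1 : 1 ≤ p) (hp2 : p < 2) :
    Integrable (fun ω => ‖ζ₁ ω / ζ₂ ω‖ ^ p) P :=
  stmt2_general P Z₁ Z₂ hm₁ hm₂ hl₁ hl₂ hind α β γ ζ₁ ζ₂ hζ₁ hζ₂ p hp1 hp2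
end

section
/- Let ζ₁ and ζ₂ be centered jointly complex Gaussian random variables with E[|ζ₂|²] ≠ 0. Then E[ζ₁/ζ₂] = E[ζ₁ \overline{ζ₂}] / E[|ζ₂|²]. -/
open MeasureTheory

/-!
Writing `ζ₁ / ζ₂ = α / γ + (β / γ) Z₂ Z₁⁻¹` (valid since `Z₁ ≠ 0` almost surely), independence
gives `E[Z₂ Z₁⁻¹] = E[Z₂] E[Z₁⁻¹] = 0`; here `Z₁⁻¹` is integrable because `|z|⁻¹` is locally
integrable in two real dimensions. Hence `E[ζ₁ / ζ₂] = α / γ`. The same expansion gives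
`E[ζ₁ ζ̄₂] = α γ̄ E|Z₁|² = α γ̄` and `E|ζ₂|² = |γ|²`, whose quotient is `α / γ` again.
-/

open ProbabilityTheory Real ComplexConjugate

theorem integral_eq_zero_of_odd {G E : Type*} [MeasurableSpace G] [AddGroup G] [MeasurableNeg G]
    [NormedAddCommGroup E] [NormedSpace ℝ E] (μ : Measure G) [μ.IsNegInvariant] {f : G → E}
    (hf : f.Odd) : ∫ x, f x ∂μ = 0 := by
  have h := integral_neg_eq_self f μ
  simp only [hf _, integral_neg] at h
  have h2 : (2 : ℝ) • ∫ x, f x ∂μ = 0 := by rw [two_smul]; nth_rw 1 [← h]; exact neg_add_cancel _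
  exact (smul_eq_zero.mp h2).resolve_left two_ne_zero

/- A non-integrable function has integral `0`, while this one integrates to a Gamma value. -/
theorem integrable_norm_rpow_mul_exp_neg_sq_s4 {q : ℝ} (hq : -2 < q) :
    Integrable fun z : ℂ => ‖z‖ ^ q * exp (-‖z‖ ^ 2) := by
  refine Integrable.of_integral_ne_zero ?_
  have h := Complex.integral_rpow_mul_exp_neg_rpow one_le_two hq
  simp only [rpow_two] at h
  rw [h]
  have := Gamma_pos_of_pos (s := (q + 2) / 2) (by linarith)
  positivity

namespace stdCGaussian

noncomputable def pdf (z : ℂ) : ℝ := 1 / π * exp (-‖z‖ ^ 2)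

lemma pdf_nonneg (z : ℂ) : 0 ≤ pdf z := by unfold pdf; positivity

lemma measurable_pdf : Measurable pdf := by unfold pdf; fun_prop

lemma pdf_even : pdf.Even := fun z => by simp only [pdf, norm_neg]

lemma eq_withDensity : stdCGaussian = volume.withDensity fun z => ENNReal.ofReal (pdf z) := rfl

variable {E : Type*} [NormedAddCommGroup E] [NormedSpace ℝ E]

lemma integral_eq (f : ℂ → E) :
    ∫ z, f z ∂stdCGaussian = ∫ z, pdf z • f z := by
  rw [eq_withDensity, integral_withDensity_eq_integral_toReal_smul measurable_pdf.ennreal_ofReal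
    (ae_of_all _ fun _ => ENNReal.ofReal_lt_top)]
  simp only [ENNReal.toReal_ofReal (pdf_nonneg _)]

lemma integrable_iff {f : ℂ → E} :
    Integrable f stdCGaussian ↔ Integrable fun z => pdf z • f z := by
  rw [eq_withDensity, integrable_withDensity_iff_integrable_smul' measurable_pdf.ennreal_ofReal
    (ae_of_all _ fun _ => ENNReal.ofReal_lt_top)]
  simp only [ENNReal.toReal_ofReal (pdf_nonneg _)]

lemma integrable_of_norm_le_rpow {f : ℂ → E} (hf : AEStronglyMeasurable f) {q : ℝ} (hq : -2 < q)
    (hle : ∀ z, ‖f z‖ ≤ ‖z‖ ^ q) : Integrable f stdCGaussian := by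
  refine integrable_iff.mpr <| ((integrable_norm_rpow_mul_exp_neg_sq_s4 hq).const_mul (1 / π)).mono'
    (measurable_pdf.aestronglyMeasurable.smul hf) (ae_of_all _ fun z => ?_)
  rw [norm_smul, norm_of_nonneg (pdf_nonneg z), pdf, mul_assoc, mul_comm (‖z‖ ^ q)]
  gcongr
  exact hle z

lemma integral_eq_zero_of_odd {f : ℂ → E} (hf : f.Odd) :
    ∫ z, f z ∂stdCGaussian = 0 := by
  rw [integral_eq]
  exact _root_.integral_eq_zero_of_odd volume fun z => by simp only [pdf_even z, hf z, smul_neg]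

lemma integral_norm_sq : ∫ z, ‖z‖ ^ 2 ∂stdCGaussian = 1 := by
  have h := Complex.integral_rpow_mul_exp_neg_rpow one_le_two (q := 2) (by norm_num)
  simp only [rpow_two] at h
  rw [integral_eq]
  simp only [pdf, smul_eq_mul, mul_assoc, mul_comm (exp _)]
  rw [integral_const_mul, h]
  norm_num

lemma ae_ne_zero : ∀ᵐ z ∂stdCGaussian, z ≠ 0 :=
  (withDensity_absolutelyContinuous _ _).ae_le (volume.ae_ne 0)

end stdCGaussian

lemma ProbabilityTheory.HasLaw.integrable_comp {Ω α E : Type*} [MeasurableSpace Ω]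
    [MeasurableSpace α] [NormedAddCommGroup E] {P : Measure Ω} {μ : Measure α} {X : Ω → α}
    (hX : HasLaw X μ P) {f : α → E} (hf : Integrable f μ) : Integrable (fun ω => f (X ω)) P :=
  (hX.map_eq ▸ hf).comp_aemeasurable hX.aemeasurable

section Kahane

variable {Ω : Type*} [MeasurableSpace Ω] {P : Measure Ω} {Z₁ Z₂ : Ω → ℂ}

lemma ProbabilityTheory.HasLaw.integral_norm_sq_stdCGaussian (hZ : HasLaw Z₁ stdCGaussian P) :
    ∫ ω, ‖Z₁ ω‖ ^ 2 ∂P = 1 :=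
  (hZ.integral_comp (f := fun z => ‖z‖ ^ 2) (by fun_prop)).trans stdCGaussian.integral_norm_sq

lemma integral_norm_mul_sq (hZ₁ : HasLaw Z₁ stdCGaussian P) (γ : ℂ) :
    ∫ ω, ‖γ * Z₁ ω‖ ^ 2 ∂P = ‖γ‖ ^ 2 := by
  simp only [norm_mul, mul_pow]
  rw [integral_const_mul, hZ₁.integral_norm_sq_stdCGaussian, mul_one]

lemma integral_mul_conj_eq_of_indepFun (hZ₁ : HasLaw Z₁ stdCGaussian P) (hZ₂ : Integrable Z₂ P)
    (hZ₂_mean : ∫ ω, Z₂ ω ∂P = 0) (hind : Z₁ ⟂ᵢ[P] Z₂) (α β γ : ℂ) :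
    ∫ ω, (α * Z₁ ω + β * Z₂ ω) * conj (γ * Z₁ ω) ∂P = α * conj γ := by
  have hind' : (fun ω => conj (Z₁ ω)) ⟂ᵢ[P] Z₂ :=
    hind.comp Complex.continuous_conj.measurable measurable_id
  have hconj : Integrable (fun ω => conj (Z₁ ω)) P :=
    hZ₁.integrable_comp <| stdCGaussian.integrable_of_norm_le_rpow
      Complex.continuous_conj.measurable.aestronglyMeasurable (q := 1) (by norm_num) fun z => by
        rw [RCLike.norm_conj, rpow_one]
  have hsq : Integrable (fun ω => ((‖Z₁ ω‖ ^ 2 : ℝ) : ℂ)) P :=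
    (hZ₁.integrable_comp <| stdCGaussian.integrable_of_norm_le_rpow
      (by fun_prop : Measurable fun z : ℂ => ((‖z‖ ^ 2 : ℝ) : ℂ)).aestronglyMeasurable
      (q := 2) (by norm_num) fun z => by simp)
  have hsq_mean : ∫ ω, ((‖Z₁ ω‖ ^ 2 : ℝ) : ℂ) ∂P = 1 := by
    rw [integral_complex_ofReal, hZ₁.integral_norm_sq_stdCGaussian, Complex.ofReal_one]
  have hcross : Integrable (fun ω => conj (Z₁ ω) * Z₂ ω) P := hind'.integrable_mul hconj hZ₂
  have hcross_mean : ∫ ω, conj (Z₁ ω) * Z₂ ω ∂P = 0 := by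
    rw [hind'.integral_fun_mul_eq_mul_integral hconj.1 hZ₂.1, hZ₂_mean, mul_zero]
  have hsplit : (fun ω => (α * Z₁ ω + β * Z₂ ω) * conj (γ * Z₁ ω))
      = fun ω => α * conj γ * ((‖Z₁ ω‖ ^ 2 : ℝ) : ℂ) + β * conj γ * (conj (Z₁ ω) * Z₂ ω) := by
    ext ω
    rw [map_mul, Complex.ofReal_pow, ← Complex.mul_conj']
    ring
  rw [hsplit, integral_add (hsq.const_mul _) (hcross.const_mul _),
    integral_const_mul, integral_const_mul, hsq_mean, hcross_mean]
  ring

variable [IsProbabilityMeasure P]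

lemma integral_div_eq_of_indepFun (hZ₁ : HasLaw Z₁ stdCGaussian P) (hZ₂ : Integrable Z₂ P)
    (hZ₂_mean : ∫ ω, Z₂ ω ∂P = 0) (hind : Z₁ ⟂ᵢ[P] Z₂) (α β γ : ℂ) :
    ∫ ω, (α * Z₁ ω + β * Z₂ ω) / (γ * Z₁ ω) ∂P = α / γ := by
  have hind' : (fun ω => (Z₁ ω)⁻¹) ⟂ᵢ[P] Z₂ := hind.comp measurable_inv measurable_id
  have hinv : Integrable (fun ω => (Z₁ ω)⁻¹) P :=
    hZ₁.integrable_comp <| stdCGaussian.integrable_of_norm_le_rpow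
      measurable_inv.aestronglyMeasurable (q := -1) (by norm_num) fun z => by
        rw [norm_inv, rpow_neg_one]
  have hratio_mean : ∫ ω, (Z₁ ω)⁻¹ * Z₂ ω ∂P = 0 := by
    rw [hind'.integral_fun_mul_eq_mul_integral hinv.1 hZ₂.1, hZ₂_mean, mul_zero]
  have hZ₁_ne : ∀ᵐ ω ∂P, Z₁ ω ≠ 0 :=
    ae_of_ae_map hZ₁.aemeasurable (hZ₁.map_eq ▸ stdCGaussian.ae_ne_zero)
  have hsplit : (fun ω => (α * Z₁ ω + β * Z₂ ω) / (γ * Z₁ ω))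
      =ᵐ[P] fun ω => α / γ + β / γ * ((Z₁ ω)⁻¹ * Z₂ ω) := by
    filter_upwards [hZ₁_ne] with ω hω
    rw [add_div, mul_div_mul_right _ _ hω]
    ring
  have hratio : Integrable (fun ω => (Z₁ ω)⁻¹ * Z₂ ω) P := hind'.integrable_mul hinv hZ₂
  rw [integral_congr_ae hsplit, integral_add (integrable_const _) (hratio.const_mul _),
    integral_const_mul, hratio_mean]
  simp

end Kahane

theorem stmt4_general {Ω : Type*} [MeasurableSpace Ω] (P : Measure Ω) [IsProbabilityMeasure P]
    (Z₁ Z₂ : Ω → ℂ) (hm₁ : Measurable Z₁) (hm₂ : Measurable Z₂)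
    (hl₁ : Measure.map Z₁ P = stdCGaussian) (hl₂ : Measure.map Z₂ P = stdCGaussian)
    (hind : ProbabilityTheory.IndepFun Z₁ Z₂ P)
    (α β γ : ℂ) (ζ₁ ζ₂ : Ω → ℂ)
    (hζ₁ : ζ₁ = fun ω => α * Z₁ ω + β * Z₂ ω)
    (hζ₂ : ζ₂ = fun ω => γ * Z₁ ω) :
    ∫ ω, ζ₁ ω / ζ₂ ω ∂P =
      (∫ ω, ζ₁ ω * (starRingEnd ℂ) (ζ₂ ω) ∂P) / ((∫ ω, ‖ζ₂ ω‖ ^ 2 ∂P : ℝ) : ℂ) := by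
  subst hζ₁ hζ₂
  have hZ₁ : HasLaw Z₁ stdCGaussian P := ⟨hm₁.aemeasurable, hl₁⟩
  have hZ₂ : HasLaw Z₂ stdCGaussian P := ⟨hm₂.aemeasurable, hl₂⟩
  have hZ₂_int : Integrable Z₂ P := hZ₂.integrable_comp (f := id) <|
    stdCGaussian.integrable_of_norm_le_rpow aestronglyMeasurable_id (q := 1) (by norm_num)
      fun z => by rw [rpow_one, id]
  have hZ₂_mean : ∫ ω, Z₂ ω ∂P = 0 := by
    rw [hZ₂.integral_eq]
    exact stdCGaussian.integral_eq_zero_of_odd fun z => rfl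
  rw [integral_div_eq_of_indepFun hZ₁ hZ₂_int hZ₂_mean hind,
    integral_mul_conj_eq_of_indepFun hZ₁ hZ₂_int hZ₂_mean hind, integral_norm_mul_sq hZ₁,
    div_eq_mul_inv, Complex.inv_def, Complex.normSq_eq_norm_sq]
  push_cast
  ring

/-- Kahane's lemma: if `ζ₁, ζ₂` are centered jointly complex Gaussian (represented
via i.i.d. standard complex Gaussians `Z₁, Z₂` as `ζ₁ = αZ₁ + βZ₂`, `ζ₂ = γZ₁`)
with `E[|ζ₂|²] ≠ 0`, then `E[ζ₁/ζ₂] = E[ζ₁ conj ζ₂] / E[|ζ₂|²]`. -/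
theorem stmt4 {Ω : Type*} [MeasurableSpace Ω] (P : Measure Ω) [IsProbabilityMeasure P]
    (Z₁ Z₂ : Ω → ℂ) (hm₁ : Measurable Z₁) (hm₂ : Measurable Z₂)
    (hl₁ : Measure.map Z₁ P = stdCGaussian) (hl₂ : Measure.map Z₂ P = stdCGaussian)
    (hind : ProbabilityTheory.IndepFun Z₁ Z₂ P)
    (α β γ : ℂ) (ζ₁ ζ₂ : Ω → ℂ)
    (hζ₁ : ζ₁ = fun ω => α * Z₁ ω + β * Z₂ ω)
    (hζ₂ : ζ₂ = fun ω => γ * Z₁ ω)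
    (hvar : (∫ ω, ‖ζ₂ ω‖ ^ 2 ∂P) ≠ 0) :
    ∫ ω, ζ₁ ω / ζ₂ ω ∂P =
      (∫ ω, ζ₁ ω * (starRingEnd ℂ) (ζ₂ ω) ∂P) / ((∫ ω, ‖ζ₂ ω‖ ^ 2 ∂P : ℝ) : ℂ) :=
  stmt4_general P Z₁ Z₂ hm₁ hm₂ hl₁ hl₂ hind α β γ ζ₁ ζ₂ hζ₁ hζ₂
end

section
/- Let γ : [0,1] → ℂ be a C¹ regular curve, and let t* ∈ (0,1) be an interior point. Then R ∫₀¹ e^{-R²|γ(t)-γ(t*)|²} |γ'(t)| dt → √π as R → ∞. -/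
set_option maxHeartbeats 1000000


open MeasureTheory

/-- Laplace asymptotics: for a regular bi-Lipschitz `C¹` curve `γ : [0,1] → ℂ` and an
interior point `t* ∈ (0,1)`,
`R ∫₀¹ e^{-R²|γ(t)-γ(t*)|²} |γ'(t)| dt → √π` as `R → ∞`. -/
theorem stmt14 (γ γ' : ℝ → ℂ) (m' M : ℝ) (hm' : 0 < m')
    (hderiv : ∀ t ∈ Set.Icc (0 : ℝ) 1, HasDerivWithinAt γ (γ' t) (Set.Icc 0 1) t)
    (hcont : ContinuousOn γ' (Set.Icc 0 1))
    (hreg : ∀ t ∈ Set.Icc (0 : ℝ) 1, γ' t ≠ 0)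
    (hbl : ∀ s ∈ Set.Icc (0 : ℝ) 1, ∀ t ∈ Set.Icc (0 : ℝ) 1,
      m' * |t - s| ≤ ‖γ t - γ s‖ ∧ ‖γ t - γ s‖ ≤ M * |t - s|)
    (tstar : ℝ) (ht : tstar ∈ Set.Ioo (0 : ℝ) 1) :
    Filter.Tendsto
      (fun R : ℝ => R * ∫ t in (0 : ℝ)..1,
        Real.exp (-R ^ 2 * ‖γ t - γ tstar‖ ^ 2) * ‖γ' t‖)
      Filter.atTop (nhds (Real.sqrt Real.pi)) := by
  obtain ⟨ht0, ht1⟩ := ht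
  have htIcc : tstar ∈ Set.Icc (0:ℝ) 1 := ⟨ht0.le, ht1.le⟩
  have hnhds : Set.Icc (0:ℝ) 1 ∈ nhds tstar := Icc_mem_nhds ht0 ht1
  have hderivAt : HasDerivAt γ (γ' tstar) tstar := (hderiv tstar htIcc).hasDerivAt hnhds
  set c : ℝ := ‖γ' tstar‖ with hc_def
  have hc : 0 < c := norm_pos_iff.mpr (hreg tstar htIcc)
  obtain ⟨C, hC⟩ := isCompact_Icc.exists_bound_of_continuousOn hcont
  have hC0 : 0 ≤ C := le_trans (norm_nonneg _) (hC 0 ⟨le_refl 0, zero_le_one⟩)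
  have hγc : ContinuousOn γ (Set.Icc (0:ℝ) 1) :=
    fun t htt => (hderiv t htt).continuousWithinAt
  -- the rescaled integrand and its indicator version
  set g : ℝ → ℝ → ℝ := fun R s =>
    Real.exp (-R ^ 2 * ‖γ (tstar + s / R) - γ tstar‖ ^ 2) * ‖γ' (tstar + s / R)‖ with hg
  set F : ℝ → ℝ → ℝ := fun R =>
    (Set.Ioc (-(R * tstar)) (R * (1 - tstar))).indicator (g R) with hFdef
  -- membership in the Ioc puts the rescaled point in [0,1]
  have hmem : ∀ R : ℝ, 0 < R → ∀ s ∈ Set.Ioc (-(R * tstar)) (R * (1 - tstar)),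
      tstar + s / R ∈ Set.Icc (0:ℝ) 1 := by
    intro R hR s hs
    obtain ⟨h1, h2⟩ := hs
    constructor
    · have : -tstar < s / R := by
        rw [lt_div_iff₀ hR]; nlinarith
      linarith
    · have : s / R ≤ 1 - tstar := by
        rw [div_le_iff₀ hR]; nlinarith
      linarith
  -- Step 1: change of variables
  have hEq : ∀ R : ℝ, 0 < R →
      R * (∫ t in (0:ℝ)..1, Real.exp (-R ^ 2 * ‖γ t - γ tstar‖ ^ 2) * ‖γ' t‖)
        = ∫ s, F R s := by
    intro R hR
    have hab : -(R * tstar) ≤ R * (1 - tstar) := by nlinarith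
    rw [hFdef]
    rw [integral_indicator measurableSet_Ioc]
    rw [← intervalIntegral.integral_of_le hab]
    have e1 : (-(R*tstar))/R = -tstar := by field_simp [mul_comm]
    have e2 : (R*(1-tstar))/R = 1 - tstar := by field_simp
    have key := intervalIntegral.integral_comp_div
      (a := -(R*tstar)) (b := R*(1-tstar))
      (f := fun u => Real.exp (-R ^ 2 * ‖γ (tstar + u) - γ tstar‖ ^ 2) * ‖γ' (tstar + u)‖)
      (ne_of_gt hR)
    rw [e1, e2] at key
    have key2 := intervalIntegral.integral_comp_add_left
      (a := -tstar) (b := 1 - tstar)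
      (fun t => Real.exp (-R ^ 2 * ‖γ t - γ tstar‖ ^ 2) * ‖γ' t‖) tstar
    have e3 : tstar + -tstar = (0:ℝ) := by ring
    have e4 : tstar + (1 - tstar) = (1:ℝ) := by ring
    rw [e3, e4] at key2
    calc R * (∫ t in (0:ℝ)..1, Real.exp (-R ^ 2 * ‖γ t - γ tstar‖ ^ 2) * ‖γ' t‖)
        = R • ∫ u in (-tstar)..(1-tstar),
            Real.exp (-R ^ 2 * ‖γ (tstar + u) - γ tstar‖ ^ 2) * ‖γ' (tstar + u)‖ := by
          rw [key2, smul_eq_mul]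
      _ = ∫ s in (-(R*tstar))..(R*(1-tstar)), g R s := key.symm
  -- Step 2: measurability
  have hmeas : ∀ R : ℝ, 0 < R → AEStronglyMeasurable (F R) volume := by
    intro R hR
    rw [hFdef]
    rw [aestronglyMeasurable_indicator_iff measurableSet_Ioc]
    have hconts : ContinuousOn (g R) (Set.Ioc (-(R * tstar)) (R * (1 - tstar))) := by
      have hmap : Set.MapsTo (fun s => tstar + s / R)
          (Set.Ioc (-(R * tstar)) (R * (1 - tstar))) (Set.Icc (0:ℝ) 1) :=
        fun s hs => hmem R hR s hs
      have haff : Continuous fun s : ℝ => tstar + s / R := by continuity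
      have h1 : ContinuousOn (fun s => γ (tstar + s / R))
          (Set.Ioc (-(R * tstar)) (R * (1 - tstar))) :=
        hγc.comp haff.continuousOn hmap
      have h2 : ContinuousOn (fun s => γ' (tstar + s / R))
          (Set.Ioc (-(R * tstar)) (R * (1 - tstar))) :=
        hcont.comp haff.continuousOn hmap
      exact ((Real.continuous_exp.comp_continuousOn
        ((continuousOn_const.mul ((h1.sub continuousOn_const).norm.pow 2)))).mul h2.norm)
    exact (hconts.aestronglyMeasurable measurableSet_Ioc)
  -- Step 3: the bound
  have hbound : ∀ R : ℝ, 0 < R → ∀ s : ℝ, ‖F R s‖ ≤ C * Real.exp (-(m' ^ 2) * s ^ 2) := by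
    intro R hR s
    by_cases hs : s ∈ Set.Ioc (-(R * tstar)) (R * (1 - tstar))
    · rw [hFdef]
      simp only [Set.indicator_of_mem hs]
      have htm : tstar + s / R ∈ Set.Icc (0:ℝ) 1 := hmem R hR s hs
      have hgnn : 0 ≤ g R s := mul_nonneg (Real.exp_pos _).le (norm_nonneg _)
      rw [Real.norm_of_nonneg hgnn]
      have hlow := (hbl tstar htIcc (tstar + s / R) htm).1
      have habs : |tstar + s / R - tstar| = |s| / R := by
        rw [add_sub_cancel_left, abs_div, abs_of_pos hR]
      have h1 : m' * (|s| / R) ≤ ‖γ (tstar + s / R) - γ tstar‖ := by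
        rw [← habs]; exact hlow
      have h3 : m' * |s| ≤ R * ‖γ (tstar + s / R) - γ tstar‖ := by
        have h4 := mul_le_mul_of_nonneg_left h1 hR.le
        calc m' * |s| = R * (m' * (|s| / R)) := by field_simp
          _ ≤ R * ‖γ (tstar + s / R) - γ tstar‖ := h4
      have hnn : 0 ≤ m' * |s| := mul_nonneg hm'.le (abs_nonneg _)
      have h2 : (m' ^ 2) * s ^ 2 ≤ R ^ 2 * ‖γ (tstar + s / R) - γ tstar‖ ^ 2 := by
        calc (m' ^ 2) * s ^ 2 = (m' * |s|) ^ 2 := by rw [mul_pow, sq_abs]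
          _ ≤ (R * ‖γ (tstar + s / R) - γ tstar‖) ^ 2 := pow_le_pow_left₀ hnn h3 2
          _ = R ^ 2 * ‖γ (tstar + s / R) - γ tstar‖ ^ 2 := by rw [mul_pow]
      have hexp : Real.exp (-R ^ 2 * ‖γ (tstar + s / R) - γ tstar‖ ^ 2)
          ≤ Real.exp (-(m' ^ 2) * s ^ 2) := by
        apply Real.exp_le_exp.mpr
        simp only [neg_mul]
        exact neg_le_neg h2
      calc g R s ≤ Real.exp (-(m' ^ 2) * s ^ 2) * C :=
            mul_le_mul hexp (hC _ htm) (norm_nonneg _) (Real.exp_pos _).le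
        _ = C * Real.exp (-(m' ^ 2) * s ^ 2) := by ring
    · rw [hFdef]
      simp only [Set.indicator_of_notMem hs, norm_zero]
      positivity
  have hbound_int : Integrable (fun s : ℝ => C * Real.exp (-(m' ^ 2) * s ^ 2)) volume := by
    have : (0:ℝ) < m' ^ 2 := by positivity
    exact (integrable_exp_neg_mul_sq this).const_mul C
  -- Step 4: pointwise limit
  have hlim : ∀ s : ℝ, Filter.Tendsto (fun R => F R s) Filter.atTop
      (nhds (Real.exp (-(c ^ 2) * s ^ 2) * c)) := by
    intro s
    -- eventually F R s = g R s
    have hev : ∀ᶠ R in Filter.atTop, F R s = g R s := by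
      filter_upwards [Filter.eventually_gt_atTop ((|s| + 1) / min tstar (1 - tstar))] with R hR
      have hmin : 0 < min tstar (1 - tstar) := lt_min ht0 (by linarith)
      have hR' : |s| + 1 < R * min tstar (1 - tstar) := by
        rw [div_lt_iff₀ hmin] at hR; linarith
      have hmemS : s ∈ Set.Ioc (-(R * tstar)) (R * (1 - tstar)) := by
        constructor
        · have h1 : R * min tstar (1 - tstar) ≤ R * tstar := by
            have hRpos : 0 < R := by
              have : 0 < (|s| + 1) / min tstar (1 - tstar) := by positivity
              linarith
            exact mul_le_mul_of_nonneg_left (min_le_left _ _) hRpos.le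
          have := neg_abs_le s
          nlinarith [abs_nonneg s]
        · have hRpos : 0 < R := by
            have : 0 < (|s| + 1) / min tstar (1 - tstar) := by positivity
            linarith
          have h1 : R * min tstar (1 - tstar) ≤ R * (1 - tstar) :=
            mul_le_mul_of_nonneg_left (min_le_right _ _) hRpos.le
          have := le_abs_self s
          nlinarith [abs_nonneg s]
      rw [hFdef]; simp only [Set.indicator_of_mem hmemS]
    rw [Filter.tendsto_congr' hev]
    -- limit of the argument
    have harg : Filter.Tendsto (fun R : ℝ => tstar + s / R) Filter.atTop (nhds tstar) := by
      have : Filter.Tendsto (fun R : ℝ => s / R) Filter.atTop (nhds 0) :=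
        tendsto_const_nhds.div_atTop Filter.tendsto_id
      simpa using tendsto_const_nhds.add this
    -- limit of |γ'|
    have hγ'lim : Filter.Tendsto (fun R : ℝ => ‖γ' (tstar + s / R)‖) Filter.atTop (nhds c) := by
      have hca : ContinuousAt γ' tstar :=
        (hcont tstar htIcc).continuousAt hnhds
      exact (hca.tendsto.comp harg).norm
    -- limit of R² ‖Δ‖²
    have hsq : Filter.Tendsto (fun R : ℝ => R ^ 2 * ‖γ (tstar + s / R) - γ tstar‖ ^ 2)
        Filter.atTop (nhds (c ^ 2 * s ^ 2)) := by
      by_cases hs0 : s = 0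
      · subst hs0
        have heq : ∀ R : ℝ, R ^ 2 * ‖γ (tstar + 0 / R) - γ tstar‖ ^ 2 = 0 := by
          intro R; simp
        have hval : c ^ 2 * (0:ℝ) ^ 2 = 0 := by ring
        rw [hval]
        exact Filter.Tendsto.congr (fun R => (heq R).symm) tendsto_const_nhds
      · have hargne : Filter.Tendsto (fun R : ℝ => tstar + s / R) Filter.atTop
            (nhdsWithin tstar {tstar}ᶜ) := by
          rw [tendsto_nhdsWithin_iff]
          refine ⟨harg, ?_⟩
          filter_upwards [Filter.eventually_gt_atTop (0:ℝ)] with R hR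
          simp only [Set.mem_compl_iff, Set.mem_singleton_iff]
          have hne : s / R ≠ 0 := div_ne_zero hs0 (ne_of_gt hR)
          intro hcontra
          apply hne
          linarith
        have hslope : Filter.Tendsto (fun R : ℝ => slope γ tstar (tstar + s / R))
            Filter.atTop (nhds (γ' tstar)) :=
          (hasDerivAt_iff_tendsto_slope.mp hderivAt).comp hargne
        have key : ∀ᶠ R in Filter.atTop,
            R ^ 2 * ‖γ (tstar + s / R) - γ tstar‖ ^ 2
              = s ^ 2 * ‖slope γ tstar (tstar + s / R)‖ ^ 2 := by
          filter_upwards [Filter.eventually_gt_atTop (0:ℝ)] with R hR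
          rw [slope_def_module, add_sub_cancel_left, norm_smul]
          have hns : ‖(s / R)⁻¹‖ = R / |s| := by
            rw [norm_inv, Real.norm_eq_abs, abs_div, abs_of_pos hR, inv_div]
          rw [hns, mul_pow, div_pow, sq_abs]
          have hs2 : s ^ 2 ≠ 0 := pow_ne_zero 2 hs0
          field_simp
        rw [Filter.tendsto_congr' key]
        have hfin := (hslope.norm.pow 2).const_mul (s ^ 2)
        convert hfin using 2
        ring
    -- combine
    have : Filter.Tendsto (fun R : ℝ =>
        Real.exp (-(R ^ 2 * ‖γ (tstar + s / R) - γ tstar‖ ^ 2)) * ‖γ' (tstar + s / R)‖)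
        Filter.atTop (nhds (Real.exp (-(c ^ 2 * s ^ 2)) * c)) :=
      ((Real.continuous_exp.tendsto _).comp hsq.neg).mul hγ'lim
    simp only [hg]
    simp only [neg_mul] at this ⊢
    exact this
  -- Step 5: the limit integral
  have hlimint : (∫ s : ℝ, Real.exp (-(c ^ 2) * s ^ 2) * c) = Real.sqrt Real.pi := by
    rw [integral_mul_const, integral_gaussian]
    have h1 : Real.sqrt (Real.pi / c ^ 2) = Real.sqrt Real.pi / c := by
      rw [Real.sqrt_div Real.pi_nonneg, Real.sqrt_sq hc.le]
    rw [h1]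
    field_simp
  -- Step 6: conclude by dominated convergence
  have hDCT : Filter.Tendsto (fun R => ∫ s, F R s) Filter.atTop (nhds (Real.sqrt Real.pi)) := by
    rw [← hlimint]
    apply tendsto_integral_filter_of_dominated_convergence
      (fun s => C * Real.exp (-(m' ^ 2) * s ^ 2))
    · filter_upwards [Filter.eventually_gt_atTop (0:ℝ)] with R hR
      exact hmeas R hR
    · filter_upwards [Filter.eventually_gt_atTop (0:ℝ)] with R hR
      exact Filter.Eventually.of_forall (hbound R hR)
    · exact hbound_int
    · exact Filter.Eventually.of_forall hlim
  apply hDCT.congr'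
  filter_upwards [Filter.eventually_gt_atTop (0:ℝ)] with R hR
  exact (hEq R hR).symm
end
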